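/- Consider the WC-Penalty iterates θ_t = (ρ_t, z_t, δ_t). For every t ≥ 1 and s ∈ [S]: δ_{t,s} ≥ 0; if λ_s f_s(z_{t−1}) + δ_{t−1,s} − ρ_{t−1} ≥ 0 then δ_{t,s} ≤ δ_{t−1,s}; and if λ_s f_s(z_{t−1}) + δ_{t−1,s} − ρ_{t−1} < 0, f_s(z_{t−1}) > 0, and ρ_{t−1} ≤ ρ_0, then δ_{t,s} ≤ δ_{t−1,s} + η v ρ_0. -/

import Mathlib

open scoped RealInnerProductSpace

noncomputable section

/-- One step of the WC-Penalty iteration `θ ↦ P_C(θ − η ∇P(θ))` on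
`θ = (ρ, z, δ) ∈ C = ℝ × ℝ^k × ℝ_+^S`: the projection onto `C` leaves `(ρ, z)`
unchanged and clips each `δ_s` at `0`; in particular
`δ'_s = max{δ_s − η v (λ_s f_s(z) + δ_s − ρ), 0}`. -/
def penStep (k S q : ℕ)
    (f : Fin S → EuclideanSpace ℝ (Fin k) → ℝ)
    (h : Fin q → EuclideanSpace ℝ (Fin k) → ℝ)
    (lam : Fin S → ℝ) (u v η : ℝ)
    (θ : ℝ × EuclideanSpace ℝ (Fin k) × (Fin S → ℝ)) :
    ℝ × EuclideanSpace ℝ (Fin k) × (Fin S → ℝ) :=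
  ( θ.1 - η * (1 - v * ∑ s, (lam s * f s θ.2.1 + θ.2.2 s - θ.1)),
    θ.2.1 - η • (u • ∑ i, h i θ.2.1 • gradient (h i) θ.2.1
      + v • ∑ s, ((lam s * f s θ.2.1 + θ.2.2 s - θ.1) * lam s) • gradient (f s) θ.2.1),
    fun s => max (θ.2.2 s - η * (v * (lam s * f s θ.2.1 + θ.2.2 s - θ.1))) 0 )

/-! The slack coordinate moves by the clipped step `δ ↦ max (δ - η v r) 0`, with residual
`r = λ_s f_s(z) + δ_s - ρ`. For `r < 0` the increase is `η v (-r)`, and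
`-r = ρ - λ_s f_s(z) - δ_s ≤ ρ ≤ ρ₀` once `λ_s f_s(z) > 0`, `δ_s ≥ 0` and `ρ ≤ ρ₀`. -/

theorem max_sub_mul_zero_le_self {δ a r : ℝ} (hδ : 0 ≤ δ) (ha : 0 ≤ a) (hr : 0 ≤ r) :
    max (δ - a * r) 0 ≤ δ :=
  max_le (by nlinarith [mul_nonneg ha hr]) hδ

theorem max_sub_mul_zero_le_add_mul {δ a r c : ℝ} (hδ : 0 ≤ δ) (ha : 0 ≤ a) (hc : 0 ≤ c)
    (hrc : -r ≤ c) : max (δ - a * r) 0 ≤ δ + a * c :=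
  max_le (by nlinarith [mul_le_mul_of_nonneg_left hrc ha]) (by positivity)

section PenStep

variable {k S q : ℕ} {f : Fin S → EuclideanSpace ℝ (Fin k) → ℝ}
  {h : Fin q → EuclideanSpace ℝ (Fin k) → ℝ} {lam : Fin S → ℝ} {u v η : ℝ}

theorem penStep_slack (θ : ℝ × EuclideanSpace ℝ (Fin k) × (Fin S → ℝ)) (s : Fin S) :
    (penStep k S q f h lam u v η θ).2.2 s
      = max (θ.2.2 s - η * v * (lam s * f s θ.2.1 + θ.2.2 s - θ.1)) 0 := by
  simp only [penStep, mul_assoc]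

theorem penStep_slack_nonneg (θ : ℝ × EuclideanSpace ℝ (Fin k) × (Fin S → ℝ)) (s : Fin S) :
    0 ≤ (penStep k S q f h lam u v η θ).2.2 s := by
  rw [penStep_slack]
  exact le_max_right _ _

theorem iterate_slack_nonneg {θ : ℕ → ℝ × EuclideanSpace ℝ (Fin k) × (Fin S → ℝ)}
    (hθ0 : ∀ s, 0 ≤ (θ 0).2.2 s) (hθstep : ∀ t, θ (t + 1) = penStep k S q f h lam u v η (θ t)) :
    ∀ t s, 0 ≤ (θ t).2.2 s
  | 0, s => hθ0 s
  | t + 1, s => hθstep t ▸ penStep_slack_nonneg (θ t) s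

end PenStep

theorem wcPenalty_slack_bounds_general
    (k S q : ℕ)
    (f : Fin S → EuclideanSpace ℝ (Fin k) → ℝ)
    (h : Fin q → EuclideanSpace ℝ (Fin k) → ℝ)
    (u v η : ℝ) (hv : 0 < v) (hη : 0 < η)
    (lam : Fin S → ℝ) (hlam_pos : ∀ s, 0 < lam s)
    -- iterates started at `θ₀ ∈ C`
    (θ₀ : ℝ × EuclideanSpace ℝ (Fin k) × (Fin S → ℝ)) (hδ₀ : ∀ s, 0 ≤ θ₀.2.2 s)
    (θ : ℕ → ℝ × EuclideanSpace ℝ (Fin k) × (Fin S → ℝ))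
    (hθ0 : θ 0 = θ₀)
    (hθstep : ∀ t, θ (t + 1) = penStep k S q f h lam u v η (θ t)) :
    ∀ t : ℕ, 1 ≤ t → ∀ s : Fin S,
      (0 ≤ (θ t).2.2 s) ∧
      (0 ≤ lam s * f s (θ (t-1)).2.1 + (θ (t-1)).2.2 s - (θ (t-1)).1 →
        (θ t).2.2 s ≤ (θ (t-1)).2.2 s) ∧
      (lam s * f s (θ (t-1)).2.1 + (θ (t-1)).2.2 s - (θ (t-1)).1 < 0 →
        0 < f s (θ (t-1)).2.1 →
        (θ (t-1)).1 ≤ θ₀.1 →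
        (θ t).2.2 s ≤ (θ (t-1)).2.2 s + η * v * θ₀.1) := by
  have hnn := iterate_slack_nonneg (hθ0 ▸ hδ₀) hθstep
  have hηv : 0 ≤ η * v := (mul_pos hη hv).le
  rintro (_ | n) ht s
  · omega
  simp only [Nat.add_sub_cancel, hθstep n, penStep_slack]
  refine ⟨le_max_right _ _, max_sub_mul_zero_le_self (hnn n s) hηv, fun hneg hfpos hρ => ?_⟩
  have hlamf : 0 < lam s * f s (θ n).2.1 := mul_pos (hlam_pos s) hfpos
  exact max_sub_mul_zero_le_add_mul (hnn n s) hηv (by linarith [hnn n s]) (by linarith [hnn n s])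

/-- **behavior of the slack variables `δ_t`.** For the WC-Penalty
iterates `θ_t = (ρ_t, z_t, δ_t)` started at `θ₀ ∈ C`, for every `t ≥ 1` and `s`:
`δ_{t,s} ≥ 0`; if `λ_s f_s(z_{t−1}) + δ_{t−1,s} − ρ_{t−1} ≥ 0` then
`δ_{t,s} ≤ δ_{t−1,s}`; and if `λ_s f_s(z_{t−1}) + δ_{t−1,s} − ρ_{t−1} < 0`,
`f_s(z_{t−1}) > 0`, and `ρ_{t−1} ≤ ρ₀`, then `δ_{t,s} ≤ δ_{t−1,s} + η v ρ₀`. -/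
theorem wcPenalty_slack_bounds
    (k S q : ℕ)
    (f : Fin S → EuclideanSpace ℝ (Fin k) → ℝ)
    (h : Fin q → EuclideanSpace ℝ (Fin k) → ℝ)
    (hf : ∀ s, ContDiff ℝ 1 (f s))
    (hh : ∀ i, ContDiff ℝ 1 (h i))
    (u v η : ℝ) (hu : 0 < u) (hv : 0 < v) (hη : 0 < η)
    (lam : Fin S → ℝ) (hlam_pos : ∀ s, 0 < lam s) (hlam_sum : ∑ s, lam s = 1)
    -- iterates started at `θ₀ ∈ C`
    (θ₀ : ℝ × EuclideanSpace ℝ (Fin k) × (Fin S → ℝ)) (hδ₀ : ∀ s, 0 ≤ θ₀.2.2 s)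
    (θ : ℕ → ℝ × EuclideanSpace ℝ (Fin k) × (Fin S → ℝ))
    (hθ0 : θ 0 = θ₀)
    (hθstep : ∀ t, θ (t + 1) = penStep k S q f h lam u v η (θ t)) :
    ∀ t : ℕ, 1 ≤ t → ∀ s : Fin S,
      (0 ≤ (θ t).2.2 s) ∧
      (0 ≤ lam s * f s (θ (t-1)).2.1 + (θ (t-1)).2.2 s - (θ (t-1)).1 →
        (θ t).2.2 s ≤ (θ (t-1)).2.2 s) ∧
      (lam s * f s (θ (t-1)).2.1 + (θ (t-1)).2.2 s - (θ (t-1)).1 < 0 →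
        0 < f s (θ (t-1)).2.1 →
        (θ (t-1)).1 ≤ θ₀.1 →
        (θ t).2.2 s ≤ (θ (t-1)).2.2 s + η * v * θ₀.1) :=
  wcPenalty_slack_bounds_general k S q f h u v η hv hη lam hlam_pos θ₀ hδ₀ θ hθ0 hθstep
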